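/- Let Ψ be the honest leased decryption key (the product over all ℓ positions of the per-position states ψᵢ). Let k ∈ ℕ, let D : (Fin ℓ → 𝔽₂) → (Fin k → 𝔽₂) be a function and r, z : Fin k → 𝔽₂ be such that D(u) = r for every u : Fin ℓ → 𝔽₂ agreeing with x at all indices i with θ i = 0 (the classical decryption property of the BB84-based SKE-CD scheme). Then for all w : Fin ℓ → 𝔽₂ × (Fin λ → 𝔽₂) and all m : Fin k → 𝔽₂, one has Ψ(w)·(if m = z + D(fun i ↦ (w i).1) then 1 else 0) = Ψ(w)·(if m = z + r then 1 else 0). (Decryption correctness of SKE-CR-SKL: applying the classical decryption algorithm coherently, branch by branch, to the honest key with ciphertext component z produces the fixed value z ⊕ r on the message register with probability 1 and leaves the key state Ψ undisturbed.) -/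
import Mathlib


open Finset

noncomputable section

/-- χ(a) ∈ ℂ equals 1 if a = 0 and −1 if a = 1, for a ∈ 𝔽₂. -/
def chi (a : ZMod 2) : ℂ := if a = 0 then 1 else -1

/-- Inner product d·u = ∑ᵢ (d i)·(u i) over 𝔽₂. -/
def dotF2 {n : ℕ} (d u : Fin n → ZMod 2) : ZMod 2 := ∑ i, d i * u i

/-- The per-position state ψᵢ of the honest leased decryption key:
a signed superposition at Hadamard positions (θ i = 1), a computational-basis
state at computational positions (θ i = 0). -/
def psiPos (ℓ lam : ℕ) (x θ : Fin ℓ → ZMod 2)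
    (s : Fin ℓ → ZMod 2 → (Fin lam → ZMod 2)) (i : Fin ℓ) :
    ZMod 2 × (Fin lam → ZMod 2) → ℂ := fun p =>
  if θ i = 1 then
    (1 / (Real.sqrt 2 : ℂ)) * (if p.1 = 0 ∧ p.2 = s i 0 then 1 else 0)
      + (chi (x i) / (Real.sqrt 2 : ℂ)) * (if p.1 = 1 ∧ p.2 = s i 1 then 1 else 0)
  else
    (if p.1 = x i ∧ p.2 = s i (x i) then 1 else 0)

/-- The honest leased decryption key: the product state Ψ(w) = ∏ᵢ ψᵢ(w i). -/
def keyState (ℓ lam : ℕ) (x θ : Fin ℓ → ZMod 2)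
    (s : Fin ℓ → ZMod 2 → (Fin lam → ZMod 2)) :
    (Fin ℓ → ZMod 2 × (Fin lam → ZMod 2)) → ℂ := fun w =>
  ∏ i, psiPos ℓ lam x θ s i (w i)

/-- Decryption correctness of SKE-CR-SKL: applying the classical decryption algorithm
coherently, branch by branch, to the honest key with ciphertext component z produces
the fixed value z ⊕ r on the message register and leaves the key state undisturbed. -/
theorem keyState_coherent_decryption (ℓ lam : ℕ) (x θ : Fin ℓ → ZMod 2)
    (s : Fin ℓ → ZMod 2 → (Fin lam → ZMod 2))
    (k : ℕ) (D : (Fin ℓ → ZMod 2) → (Fin k → ZMod 2)) (r z : Fin k → ZMod 2)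
    (hD : ∀ u : Fin ℓ → ZMod 2, (∀ i, θ i = 0 → u i = x i) → D u = r) :
    ∀ (w : Fin ℓ → ZMod 2 × (Fin lam → ZMod 2)) (m : Fin k → ZMod 2),
      keyState ℓ lam x θ s w * (if m = z + D (fun i => (w i).1) then 1 else 0)
        = keyState ℓ lam x θ s w * (if m = z + r then 1 else 0) := by
  intro w m
  by_cases h : ∀ i, θ i = 0 → (w i).1 = x i
  · rw [hD _ h]
  · push_neg at h
    obtain ⟨i, hi0, hne⟩ := h
    have hz : keyState ℓ lam x θ s w = 0 := by
      apply Finset.prod_eq_zero (Finset.mem_univ i)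
      simp [psiPos, hi0, hne]
    simp [hz]

end
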